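/- Let τ > 0 and G ∈ B_c, and define F(x) = G(x) e^{x²/(4τ)} − G(0) − (1/(2τ)) ∫_0^x G(ξ) ξ e^{ξ²/(4τ)} dξ (this is the primitive F(x) = ∫_0^x f of the distribution f with f·ω_τ = G'). Then |F(x)| ≤ ‖G‖'_∞ e^{x²/(4τ)} for all x ∈ ℝ, and F(x) e^{−x²/(4τ)} → 0 as |x| → ∞. -/

import Mathlib

open MeasureTheory Filter Topology

/-- `G ∈ B_c`: continuous, vanishing at `−∞`, with a finite limit at `+∞`. -/
def memBc (G : ℝ → ℝ) : Prop :=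
  Continuous G ∧ Tendsto G atBot (nhds (0 : ℝ)) ∧ ∃ L : ℝ, Tendsto G atTop (nhds L)

/-- `‖G‖'_∞ = sup_{x<y} |G(x) − G(y)|`. -/
noncomputable def normBc (G : ℝ → ℝ) : ℝ :=
  sSup {r : ℝ | ∃ x y : ℝ, x < y ∧ r = |G x - G y|}

/-- The primitive `F(x) = ∫_0^x f` of the distribution `f ∈ A_{c,τ}` with `f·ω_τ = G'`:
`F(x) = G(x) e^{x²/(4τ)} − G(0) − (1/(2τ)) ∫_0^x G(ξ) ξ e^{ξ²/(4τ)} dξ`. -/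
noncomputable def wPrim (τ : ℝ) (G : ℝ → ℝ) (x : ℝ) : ℝ :=
  G x * Real.exp (x ^ 2 / (4 * τ)) - G 0 -
    (1 / (2 * τ)) * ∫ ξ in (0 : ℝ)..x, G ξ * ξ * Real.exp (ξ ^ 2 / (4 * τ))

/-!
Since `∫₀ˣ ξ/(2τ) e^{ξ²/(4τ)} dξ = e^{x²/(4τ)} - 1`, subtracting a constant `c` from `G` does not
change `F`, so `F(x) = (G(x) - c) e^{x²/(4τ)} - (G(0) - c) - ∫₀ˣ (G(ξ) - c) ξ/(2τ) e^{ξ²/(4τ)} dξ`.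
With `c = G(x)` the kernel is nonnegative on `[0, x]` (for `x ≥ 0`) and every `|G(ξ) - G(x)|` is at
most `‖G‖'_∞`, which gives the bound. With `c = lim_{+∞} G` every term is `o(e^{x²/(4τ)})`, the
integral by a Cesàro-type argument. Negative `x` reduce to positive ones through
`F_G(-x) = F_{G(-·)}(x)`.
-/

open Set Asymptotics

lemma abs_integral_mul_le_of_abs_le {φ w : ℝ → ℝ} {a b M : ℝ} (hab : a ≤ b)
    (hw : IntervalIntegrable w volume a b) (hw0 : ∀ ξ ∈ Ioc a b, 0 ≤ w ξ)
    (hφ : ∀ ξ ∈ Ioc a b, |φ ξ| ≤ M) :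
    |∫ ξ in a..b, φ ξ * w ξ| ≤ M * ∫ ξ in a..b, w ξ := by
  rw [← Real.norm_eq_abs, ← intervalIntegral.integral_const_mul M w]
  refine intervalIntegral.norm_integral_le_of_norm_le hab (ae_of_all _ fun ξ hξ => ?_)
    (hw.const_mul M)
  rw [Real.norm_eq_abs, abs_mul, abs_of_nonneg (hw0 ξ hξ)]
  exact mul_le_mul_of_nonneg_right (hφ ξ hξ) (hw0 ξ hξ)

theorem isLittleO_integral_mul_of_tendsto_zero {φ w W : ℝ → ℝ} (a : ℝ) (hφ : Continuous φ)
    (hφ0 : Tendsto φ atTop (𝓝 0)) (hw : Continuous w) (hw0 : ∀ᶠ ξ in atTop, 0 ≤ w ξ)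
    (hW : ∀ x, HasDerivAt W (w x) x) (hWtop : Tendsto W atTop atTop) :
    (fun x => ∫ ξ in a..x, φ ξ * w ξ) =o[atTop] W := by
  have hφw : Continuous fun ξ => φ ξ * w ξ := hφ.mul hw
  rw [isLittleO_iff]
  intro ε hε
  have hsmall : ∀ᶠ ξ in atTop, |φ ξ| ≤ ε / 2 := by
    simpa only [Real.dist_0_eq_abs] using
      hφ0.eventually (Metric.closedBall_mem_nhds 0 (half_pos hε))
  obtain ⟨A, hA⟩ := (hsmall.and hw0).exists_forall_of_atTop
  set C := |∫ ξ in a..A, φ ξ * w ξ| + ε / 2 * |W A| with hC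
  filter_upwards [eventually_ge_atTop A, hWtop.eventually_ge_atTop (C / (ε / 2))]
    with x hAx hWx
  have htail : |∫ ξ in A..x, φ ξ * w ξ| ≤ ε / 2 * (W x - W A) := by
    rw [← intervalIntegral.integral_eq_sub_of_hasDerivAt (fun ξ _ => hW ξ)
      (hw.intervalIntegrable _ _)]
    exact abs_integral_mul_le_of_abs_le hAx (hw.intervalIntegrable _ _)
      (fun ξ hξ => (hA ξ hξ.1.le).2) (fun ξ hξ => (hA ξ hξ.1.le).1)
  have hCW : C ≤ ε / 2 * W x := by rwa [div_le_iff₀' (half_pos hε)] at hWx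
  rw [Real.norm_eq_abs, Real.norm_eq_abs, ← intervalIntegral.integral_add_adjacent_intervals
    (hφw.intervalIntegrable a A) (hφw.intervalIntegrable A x)]
  calc |(∫ ξ in a..A, φ ξ * w ξ) + ∫ ξ in A..x, φ ξ * w ξ|
      ≤ |∫ ξ in a..A, φ ξ * w ξ| + ε / 2 * (W x - W A) := (abs_add_le _ _).trans (by gcongr)
    _ ≤ C + ε / 2 * W x := by
        linarith [mul_le_mul_of_nonneg_left (neg_abs_le (W A)) (half_pos hε).le]
    _ ≤ ε * |W x| := by linarith [mul_le_mul_of_nonneg_left (le_abs_self (W x)) hε.le]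

lemma abs_sub_le_normBc {G : ℝ → ℝ} (hG : Bornology.IsBounded (range G)) (a b : ℝ) :
    |G a - G b| ≤ normBc G := by
  obtain ⟨C, hC⟩ := Metric.isBounded_iff.1 hG
  have hbdd : BddAbove {r : ℝ | ∃ x y : ℝ, x < y ∧ r = |G x - G y|} := by
    refine ⟨C, ?_⟩
    rintro _ ⟨x, y, -, rfl⟩
    exact hC (mem_range_self x) (mem_range_self y)
  rcases lt_trichotomy a b with hab | rfl | hba
  · exact le_csSup hbdd ⟨a, b, hab, rfl⟩
  · rw [sub_self, abs_zero]
    exact (abs_nonneg _).trans (le_csSup hbdd ⟨0, 1, one_pos, rfl⟩)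
  · rw [abs_sub_comm]
    exact le_csSup hbdd ⟨b, a, hba, rfl⟩

/-- `1 / ω_τ`. -/
noncomputable def invWeight (τ x : ℝ) : ℝ := Real.exp (x ^ 2 / (4 * τ))

noncomputable def invWeightDeriv (τ x : ℝ) : ℝ := x / (2 * τ) * invWeight τ x

lemma hasDerivAt_invWeight (τ x : ℝ) : HasDerivAt (invWeight τ) (invWeightDeriv τ x) x := by
  have h := ((hasDerivAt_pow 2 x).div_const (4 * τ)).exp
  refine h.congr_deriv ?_
  rw [invWeightDeriv, invWeight]
  norm_num
  ring

lemma continuous_invWeightDeriv (τ : ℝ) : Continuous (invWeightDeriv τ) := by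
  unfold invWeightDeriv invWeight; fun_prop

lemma integral_invWeightDeriv (τ a b : ℝ) :
    ∫ ξ in a..b, invWeightDeriv τ ξ = invWeight τ b - invWeight τ a :=
  intervalIntegral.integral_eq_sub_of_hasDerivAt (fun ξ _ => hasDerivAt_invWeight τ ξ)
    ((continuous_invWeightDeriv τ).intervalIntegrable _ _)

lemma invWeightDeriv_nonneg {τ x : ℝ} (hτ : 0 ≤ τ) (hx : 0 ≤ x) : 0 ≤ invWeightDeriv τ x := by
  unfold invWeightDeriv invWeight; positivity

lemma invWeight_zero (τ : ℝ) : invWeight τ 0 = 1 := by simp [invWeight]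

lemma invWeight_neg (τ x : ℝ) : invWeight τ (-x) = invWeight τ x := by simp [invWeight]

lemma tendsto_invWeight_atTop {τ : ℝ} (hτ : 0 < τ) : Tendsto (invWeight τ) atTop atTop :=
  Real.tendsto_exp_atTop.comp <|
    (tendsto_pow_atTop two_ne_zero).atTop_div_const (by positivity)

lemma wPrim_eq_sub_const (τ : ℝ) {G : ℝ → ℝ} (hG : Continuous G) (c x : ℝ) :
    wPrim τ G x = (G x - c) * invWeight τ x - (G 0 - c) -
      ∫ ξ in (0 : ℝ)..x, (G ξ - c) * invWeightDeriv τ ξ := by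
  have hsplit : ∫ ξ in (0 : ℝ)..x, (G ξ - c) * invWeightDeriv τ ξ =
      (∫ ξ in (0 : ℝ)..x, G ξ * invWeightDeriv τ ξ) - c * (invWeight τ x - 1) := by
    have hGk : IntervalIntegrable (fun ξ => G ξ * invWeightDeriv τ ξ) volume 0 x :=
      (hG.mul (continuous_invWeightDeriv τ)).intervalIntegrable _ _
    have hck : IntervalIntegrable (fun ξ => c * invWeightDeriv τ ξ) volume 0 x :=
      (continuous_invWeightDeriv τ).intervalIntegrable _ _ |>.const_mul c
    simp only [sub_mul]
    rw [intervalIntegral.integral_sub hGk hck, intervalIntegral.integral_const_mul,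
      integral_invWeightDeriv, invWeight_zero]
  have hkernel : (1 / (2 * τ)) * ∫ ξ in (0 : ℝ)..x, G ξ * ξ * Real.exp (ξ ^ 2 / (4 * τ)) =
      ∫ ξ in (0 : ℝ)..x, G ξ * invWeightDeriv τ ξ := by
    rw [← intervalIntegral.integral_const_mul]
    congr 1 with ξ
    rw [invWeightDeriv, invWeight]
    ring
  rw [wPrim, hkernel, hsplit, invWeight]
  ring

lemma wPrim_neg (τ : ℝ) (G : ℝ → ℝ) (x : ℝ) :
    wPrim τ G (-x) = wPrim τ (fun ξ => G (-ξ)) x := by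
  have hsubst : ∫ ξ in (0 : ℝ)..x, G (-ξ) * ξ * Real.exp (ξ ^ 2 / (4 * τ)) =
      ∫ ξ in (0 : ℝ)..-x, G ξ * ξ * Real.exp (ξ ^ 2 / (4 * τ)) := by
    have h := intervalIntegral.integral_comp_neg (a := 0) (b := x)
      (fun η => -(G η * η * Real.exp (η ^ 2 / (4 * τ))))
    simp only [neg_zero, even_two.neg_pow, mul_neg, neg_mul, neg_neg] at h
    rw [h, intervalIntegral.integral_neg, ← intervalIntegral.integral_symm]
  simp only [wPrim, neg_zero, even_two.neg_pow, hsubst]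

lemma abs_wPrim_le {τ M : ℝ} (hτ : 0 ≤ τ) {G : ℝ → ℝ} (hG : Continuous G)
    (hM : ∀ a b, |G a - G b| ≤ M) (x : ℝ) : |wPrim τ G x| ≤ M * invWeight τ x := by
  wlog hx : 0 ≤ x generalizing G x
  · have h := this (G := fun ξ => G (-ξ)) (hG.comp continuous_neg) (fun a b => hM (-a) (-b))
      (-x) (by linarith)
    rwa [← wPrim_neg, neg_neg, invWeight_neg] at h
  have hint : |∫ ξ in (0 : ℝ)..x, (G ξ - G x) * invWeightDeriv τ ξ| ≤
      M * (invWeight τ x - 1) := by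
    rw [← invWeight_zero τ, ← integral_invWeightDeriv]
    exact abs_integral_mul_le_of_abs_le hx
      ((continuous_invWeightDeriv τ).intervalIntegrable _ _)
      (fun ξ hξ => invWeightDeriv_nonneg hτ hξ.1.le) (fun ξ _ => hM ξ x)
  rw [wPrim_eq_sub_const τ hG (G x), sub_self, zero_mul, zero_sub]
  calc |-(G 0 - G x) - ∫ ξ in (0 : ℝ)..x, (G ξ - G x) * invWeightDeriv τ ξ|
      ≤ |G 0 - G x| + |∫ ξ in (0 : ℝ)..x, (G ξ - G x) * invWeightDeriv τ ξ| := by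
        simpa only [abs_neg] using abs_sub (-(G 0 - G x)) _
    _ ≤ M + M * (invWeight τ x - 1) := add_le_add (hM 0 x) hint
    _ = M * invWeight τ x := by ring

lemma wPrim_isLittleO_atTop {τ L : ℝ} (hτ : 0 < τ) {G : ℝ → ℝ} (hG : Continuous G)
    (hL : Tendsto G atTop (𝓝 L)) : wPrim τ G =o[atTop] invWeight τ := by
  have hGL : Tendsto (fun x => G x - L) atTop (𝓝 0) := by
    simpa using hL.sub_const L
  have hfar := tendsto_invWeight_atTop hτ
  have hmain : (fun x => (G x - L) * invWeight τ x) =o[atTop] invWeight τ := by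
    simpa using ((isLittleO_one_iff ℝ).2 hGL).mul_isBigO (isBigO_refl (invWeight τ) atTop)
  have hconst : (fun _ => G 0 - L) =o[atTop] invWeight τ :=
    isLittleO_const_left.2 <| .inr <| tendsto_norm_atTop_atTop.comp hfar
  have hintegral := isLittleO_integral_mul_of_tendsto_zero 0 (hG.sub continuous_const) hGL
    (continuous_invWeightDeriv τ)
    ((eventually_ge_atTop 0).mono fun ξ => invWeightDeriv_nonneg hτ.le)
    (hasDerivAt_invWeight τ) hfar
  exact ((hmain.sub hconst).sub hintegral).congr_left fun x =>
    (wPrim_eq_sub_const τ hG L x).symm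

lemma wPrim_isLittleO_atBot {τ L : ℝ} (hτ : 0 < τ) {G : ℝ → ℝ} (hG : Continuous G)
    (hL : Tendsto G atBot (𝓝 L)) : wPrim τ G =o[atBot] invWeight τ := by
  have h := (wPrim_isLittleO_atTop hτ (hG.comp continuous_neg)
    (hL.comp tendsto_neg_atTop_atBot)).comp_tendsto tendsto_neg_atBot_atTop
  simpa only [Function.comp_def, ← wPrim_neg, neg_neg, invWeight_neg] using h

/-- `|F(x)| ≤ ‖G‖'_∞ e^{x²/(4τ)}` for all `x`, and `F(x) e^{−x²/(4τ)} → 0` as `|x| → ∞`. -/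
theorem stmt13 (τ : ℝ) (hτ : 0 < τ) (G : ℝ → ℝ) (hG : memBc G) :
    (∀ x : ℝ, |wPrim τ G x| ≤ normBc G * Real.exp (x ^ 2 / (4 * τ))) ∧
    Tendsto (fun x : ℝ => wPrim τ G x * Real.exp (-x ^ 2 / (4 * τ))) atTop (nhds 0) ∧
    Tendsto (fun x : ℝ => wPrim τ G x * Real.exp (-x ^ 2 / (4 * τ))) atBot (nhds 0) := by
  obtain ⟨hGc, hG0, L, hGL⟩ := hG
  have hbdd : Bornology.IsBounded (range G) :=
    hGc.isBounded_range_iff_isBigO_atTop_atBot.2 ⟨hGL.isBigO_one ℝ, hG0.isBigO_one ℝ⟩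
  have hdecay : ∀ l : Filter ℝ, wPrim τ G =o[l] invWeight τ →
      Tendsto (fun x : ℝ => wPrim τ G x * Real.exp (-x ^ 2 / (4 * τ))) l (𝓝 0) :=
    fun l h => h.tendsto_div_nhds_zero.congr fun x => by
      rw [invWeight, neg_div, Real.exp_neg, div_eq_mul_inv]
  exact ⟨abs_wPrim_le hτ.le hGc (abs_sub_le_normBc hbdd),
    hdecay _ (wPrim_isLittleO_atTop hτ hGc hGL), hdecay _ (wPrim_isLittleO_atBot hτ hGc hG0)⟩
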